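/- For indicator variables X_i of events {M_i ⊆ G(n,p)} where each M_i is an ℓ-matching, and Y_i = X_i - p^ℓ, for any finite index set I we have |E(∏_{i∈I} Y_i)| ≤ 2^{|I|} · p^{|∪_{i∈I} M_i|}, where |∪_{i∈I} M_i| denotes the number of edges in the union. -/

import Mathlib

/-!
Expanding `∏_{i∈I} (1[M_i ⊆ G] - p^ℓ)` over the subsets `J ⊆ I` of indices taken from the
indicator side turns the expectation into `∑_J p^{|⋃_{i∈J} M_i|} (-p^ℓ)^{|I \ J|}`. Since
`|⋃_{i∈I} M_i| ≤ |⋃_{i∈J} M_i| + ℓ |I \ J|` and `p ≤ 1`, each of the `2^{|I|}` terms has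
absolute value at most `p^{|⋃_{i∈I} M_i|}`.
-/

open Finset Nat

/-- A matching in `K_n`: a set of non-loop edges that are pairwise vertex-disjoint. -/
def IsMatching {n : ℕ} (M : Finset (Sym2 (Fin n))) : Prop :=
  (∀ e ∈ M, ¬ e.IsDiag) ∧
    ∀ e ∈ M, ∀ f ∈ M, e ≠ f → ∀ v : Fin n, v ∈ e → v ∉ f

/-- The edge set of the complete graph on `n` vertices. -/
def edgeSet (n : ℕ) : Finset (Sym2 (Fin n)) :=
  Finset.univ.filter fun e => ¬ e.IsDiag

/-- The probability of a particular graph `G ⊆ E(K_n)` in `G(n,p)`. -/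
noncomputable def erWeight (n : ℕ) (p : ℝ) (G : Finset (Sym2 (Fin n))) : ℝ :=
  p ^ G.card * (1 - p) ^ ((edgeSet n).card - G.card)

/-- Expectation of a function of the random graph `G(n,p)`. -/
noncomputable def erExp (n : ℕ) (p : ℝ) (f : Finset (Sym2 (Fin n)) → ℝ) : ℝ :=
  ∑ G ∈ (edgeSet n).powerset, erWeight n p G * f G

/-- The centred indicator `Y = 1[M ⊆ G(n,p)] - p^ℓ` of an `ℓ`-matching `M`. -/
noncomputable def Yc (n ℓ : ℕ) (p : ℝ) (M G : Finset (Sym2 (Fin n))) : ℝ :=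
  (if M ⊆ G then (1 : ℝ) else 0) - p ^ ℓ

theorem sum_powerset_weight_mul_ite_subset {α : Type*} [DecidableEq α] (p : ℝ)
    {E S : Finset α} (hS : S ⊆ E) :
    ∑ G ∈ E.powerset, p ^ G.card * (1 - p) ^ (E.card - G.card) * (if S ⊆ G then 1 else 0) =
      p ^ S.card := by
  -- Expand `∏_{e∈E} (p + q_e)`, where `q_e = 0` on `S` forces `S ⊆ G` in every surviving term.
  have hexpand := prod_add (fun _ => p) (fun e => if e ∉ S then 1 - p else 0) E
  have hfactor (e : α) : p + (if e ∉ S then 1 - p else 0) = if e ∈ S then p else 1 := by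
    split_ifs <;> ring
  rw [prod_congr rfl fun e _ => hfactor e, prod_ite_mem, inter_eq_right.2 hS, prod_const]
    at hexpand
  rw [hexpand]
  refine sum_congr rfl fun G hG => ?_
  have hGE := mem_powerset.1 hG
  have hsub : (∀ e ∈ E \ G, e ∉ S) ↔ S ⊆ G := by
    refine ⟨fun h e heS => ?_, fun h e he heS => (mem_sdiff.1 he).2 (h heS)⟩
    by_contra heG
    exact h e (mem_sdiff.2 ⟨hS heS, heG⟩) heS
  simp only [prod_ite_zero, hsub, prod_const, card_sdiff_of_subset hGE]
  split_ifs <;> simp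

theorem IsMatching.subset_edgeSet {n : ℕ} {M : Finset (Sym2 (Fin n))} (hM : IsMatching M) :
    M ⊆ edgeSet n := fun e he => mem_filter.2 ⟨mem_univ e, hM.1 e he⟩

theorem erExp_ite_subset {n : ℕ} (p : ℝ) {S : Finset (Sym2 (Fin n))} (hS : S ⊆ edgeSet n) :
    erExp n p (fun G => if S ⊆ G then 1 else 0) = p ^ S.card :=
  sum_powerset_weight_mul_ite_subset p hS

theorem erExp_sum {n : ℕ} (p : ℝ) {ι : Type*} (s : Finset ι)
    (f : ι → Finset (Sym2 (Fin n)) → ℝ) :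
    erExp n p (fun G => ∑ i ∈ s, f i G) = ∑ i ∈ s, erExp n p (f i) := by
  simp only [erExp, mul_sum]
  exact sum_comm

theorem erExp_mul_const {n : ℕ} (p : ℝ) (f : Finset (Sym2 (Fin n)) → ℝ) (c : ℝ) :
    erExp n p (fun G => f G * c) = erExp n p f * c := by
  simp only [erExp, sum_mul, mul_assoc]

theorem prod_Yc_eq_sum_powerset {n ℓ k : ℕ} (p : ℝ) (M : Fin k → Finset (Sym2 (Fin n)))
    (I : Finset (Fin k)) (G : Finset (Sym2 (Fin n))) :
    ∏ i ∈ I, Yc n ℓ p (M i) G =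
      ∑ J ∈ I.powerset, (if J.sup M ⊆ G then 1 else 0) * (-p ^ ℓ) ^ (I \ J).card := by
  simp only [Yc, sub_eq_add_neg, prod_add, prod_boole, prod_const]
  refine sum_congr rfl fun J _ => ?_
  simp only [Finset.sup_le_iff]
  congr

theorem erExp_prod_Yc {n ℓ k : ℕ} (p : ℝ) (M : Fin k → Finset (Sym2 (Fin n)))
    (hM : ∀ i, M i ⊆ edgeSet n) (I : Finset (Fin k)) :
    erExp n p (fun G => ∏ i ∈ I, Yc n ℓ p (M i) G) =
      ∑ J ∈ I.powerset, p ^ (J.sup M).card * (-p ^ ℓ) ^ (I \ J).card := by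
  simp only [prod_Yc_eq_sum_powerset, erExp_sum, erExp_mul_const]
  refine sum_congr rfl fun J _ => ?_
  rw [erExp_ite_subset p (Finset.sup_le fun i _ => hM i)]

theorem card_sup_le_card_sup_add {ι α : Type*} [DecidableEq ι] [DecidableEq α]
    {M : ι → Finset α} {ℓ : ℕ} (hM : ∀ i, (M i).card ≤ ℓ) {I J : Finset ι} (hJ : J ⊆ I) :
    (I.sup M).card ≤ (J.sup M).card + ℓ * (I \ J).card := by
  have hsplit : I.sup M = J.sup M ∪ (I \ J).sup M := by
    rw [← sup_eq_union, ← sup_union, union_sdiff_of_subset hJ]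
  have hrest : ((I \ J).sup M).card ≤ ℓ * (I \ J).card := by
    rw [sup_eq_biUnion, mul_comm, ← smul_eq_mul, ← sum_const]
    exact card_biUnion_le.trans (sum_le_sum fun i _ => hM i)
  rw [hsplit]
  exact (card_union_le _ _).trans (Nat.add_le_add_left hrest _)

theorem abs_pow_mul_neg_pow_pow_le {p : ℝ} (hp0 : 0 ≤ p) (hp1 : p ≤ 1) {a b c ℓ : ℕ}
    (h : c ≤ a + ℓ * b) : |p ^ a * (-p ^ ℓ) ^ b| ≤ p ^ c := by
  rw [abs_mul, abs_pow, abs_pow, abs_neg, abs_pow, abs_of_nonneg hp0, ← pow_mul, ← pow_add]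
  exact pow_le_pow_of_le_one hp0 hp1 h

/-- For `ℓ`-matchings `M i` and centred indicators `Y_i = 1[M_i ⊆ G(n,p)] - p^ℓ`,
for any finite index set `I`, `|E(∏_{i∈I} Y_i)| ≤ 2^{|I|} ⬝ p^{|⋃_{i∈I} M_i|}`. -/
theorem abs_expectation_prod_le (n ℓ k : ℕ) (p : ℝ) (hp0 : 0 ≤ p) (hp1 : p ≤ 1)
    (M : Fin k → Finset (Sym2 (Fin n)))
    (hM : ∀ i, IsMatching (M i) ∧ (M i).card = ℓ)
    (I : Finset (Fin k)) :
    |erExp n p (fun G => ∏ i ∈ I, Yc n ℓ p (M i) G)| ≤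
      2 ^ I.card * p ^ (I.sup M).card := by
  rw [erExp_prod_Yc p M (fun i => (hM i).1.subset_edgeSet)]
  calc |∑ J ∈ I.powerset, p ^ (J.sup M).card * (-p ^ ℓ) ^ (I \ J).card|
      ≤ ∑ J ∈ I.powerset, |p ^ (J.sup M).card * (-p ^ ℓ) ^ (I \ J).card| :=
        abs_sum_le_sum_abs _ _
    _ ≤ ∑ _J ∈ I.powerset, p ^ (I.sup M).card :=
        sum_le_sum fun J hJ => abs_pow_mul_neg_pow_pow_le hp0 hp1 <|
          card_sup_le_card_sup_add (fun i => (hM i).2.le) (mem_powerset.1 hJ)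
    _ = 2 ^ I.card * p ^ (I.sup M).card := by
        rw [sum_const, card_powerset, nsmul_eq_mul, Nat.cast_pow, Nat.cast_ofNat]
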